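/- Let (Ω, μ) and (S, ν) be measure spaces, Γ ⊆ S a measurable set, and d ≥ 1. Let q, σ ∈ L²(μ; ℝᵈ), f, u ∈ L²(μ), let κ_Ω : Ω → ℝ and κ : Γ → ℝ be measurable with κ̲ ≤ κ_Ω ≤ κ̄ μ-a.e. and κ̲ ≤ κ ≤ κ̄ ν-a.e. for constants 0 < κ̲ ≤ κ̄, let τ : S → ℝ be measurable with 0 < τ ≤ τ̄ ν-a.e. for some τ̄ > 0, let w : S → ℝ be measurable with ∫_S τ w² dν < ∞, and let φ, ḡ, δ, l : Γ → ℝ be measurable with 0 < l ≤ κ̲/(3τ̄) ν-a.e. on Γ and all integrals below finite. Assume: (a) ∫_Ω |q|² dμ ≤ κ̄ ∫_Ω κ_Ω |σ|² dμ; (b) the flux-deviation bound ∫_Γ l δ² dν ≤ (κ̲/3) ∫_Ω κ_Ω |σ|² dμ; (c) the energy identity ∫_Ω κ_Ω |σ|² dμ + ∫_S τ w² dν = −∫_Γ φ·[(κ/l)(φ − ḡ) − δ + τ w] dν + ∫_Ω f u dμ. Then ∫_Ω |q|² dμ + ∫_Ω κ_Ω |σ|² dμ + ∫_S τ w² dν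 + ∫_Γ (κ/l) φ² dν ≤ max{1, κ̄} · (4 ‖f‖_{L²(μ)} ‖u‖_{L²(μ)} + 6 ∫_Γ (κ/l) ḡ² dν). -/

import Mathlib

/-!
By the energy identity, `∫ κ|σ|² + ∫ τw²` equals the boundary term
`-∫_Γ φ[(κ/l)(φ - ḡ) - δ + τw]` plus `∫ f u ≤ ‖f‖‖u‖`. Young's inequality on the three cross
terms, each weighted against `(κ/l)φ²/6`, bounds the boundary term by
`-½∫_Γ (κ/l)φ² + (3/2)∫_Γ (κ/l)ḡ² + (3/(2κ̲))∫_Γ lδ² + ½∫_Γ τw²`. The constraint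
`l ≤ κ̲/(3τ̄)` is what makes `3τ ≤ κ/l`, needed for the `τw`-term, and the deviation bound absorbs
the `δ`-term into `½∫ κ|σ|²`. Hence `∫ κ|σ|² + ∫ τw² + ∫_Γ (κ/l)φ² ≤ 2‖f‖‖u‖ + 3∫_Γ (κ/l)ḡ²`,
and the flux bound `∫|q|² ≤ κ̄ ∫ κ|σ|²` finishes the estimate.
-/

open MeasureTheory

lemma neg_mul_boundary_flux_le {c l τ κlo φ g δ w : ℝ} (hκlo : 0 < κlo) (hcl : κlo ≤ c * l)
    (hτ : 0 ≤ τ) (hτc : 3 * τ ≤ c) :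
    -(φ * (c * (φ - g) - δ + τ * w))
      ≤ -(1 / 2) * (c * φ ^ 2) + (3 / 2) * (c * g ^ 2)
        + (3 / (2 * κlo)) * (l * δ ^ 2) + (1 / 2) * (τ * w ^ 2) := by
  have hc : 0 < c := (le_trans (by linarith) hτc : 0 ≤ c).lt_of_ne fun hc0 => by
    rw [← hc0, zero_mul] at hcl; linarith
  have hφg : c * (φ * g) ≤ c * φ ^ 2 / 6 + 3 / 2 * (c * g ^ 2) := by
    nlinarith [mul_nonneg hc.le (sq_nonneg (φ - 3 * g))]
  have hφδ : φ * δ ≤ c * φ ^ 2 / 6 + 3 / (2 * κlo) * (l * δ ^ 2) := by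
    have hδ : 3 / 2 * δ ^ 2 ≤ c * (3 / (2 * κlo) * (l * δ ^ 2)) := by
      calc 3 / 2 * δ ^ 2 = 3 / (2 * κlo) * (κlo * δ ^ 2) := by field_simp
        _ ≤ 3 / (2 * κlo) * (c * l * δ ^ 2) := by gcongr
        _ = c * (3 / (2 * κlo) * (l * δ ^ 2)) := by ring
    refine le_of_mul_le_mul_left ?_ hc
    nlinarith [sq_nonneg (c * φ - 3 * δ)]
  have hφw : -(τ * (φ * w)) ≤ c * φ ^ 2 / 6 + 1 / 2 * (τ * w ^ 2) := by
    nlinarith [mul_nonneg hτ (sq_nonneg (φ + w)), mul_nonneg (sub_nonneg.2 hτc) (sq_nonneg φ)]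
  nlinarith [hφg, hφδ, hφw]

lemma neg_integral_boundary_flux_le {S : Type*} [MeasurableSpace S] {ν : Measure S}
    {c l τ φ g δ w : S → ℝ} {κlo : ℝ} (hκlo : 0 < κlo) (hcl : ∀ᵐ x ∂ν, κlo ≤ c x * l x)
    (hτ : ∀ᵐ x ∂ν, 0 ≤ τ x ∧ 3 * τ x ≤ c x)
    (hint : Integrable (fun x => φ x * (c x * (φ x - g x) - δ x + τ x * w x)) ν)
    (hφ : Integrable (fun x => c x * φ x ^ 2) ν) (hg : Integrable (fun x => c x * g x ^ 2) ν)
    (hδ : Integrable (fun x => l x * δ x ^ 2) ν) (hw : Integrable (fun x => τ x * w x ^ 2) ν) :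
    -∫ x, φ x * (c x * (φ x - g x) - δ x + τ x * w x) ∂ν
      ≤ -(1 / 2) * ∫ x, c x * φ x ^ 2 ∂ν + (3 / 2) * ∫ x, c x * g x ^ 2 ∂ν
        + (3 / (2 * κlo)) * ∫ x, l x * δ x ^ 2 ∂ν + (1 / 2) * ∫ x, τ x * w x ^ 2 ∂ν := by
  have hφ' := hφ.const_mul (-(1 / 2)); have hg' := hg.const_mul (3 / 2)
  have hδ' := hδ.const_mul (3 / (2 * κlo)); have hw' := hw.const_mul (1 / 2)
  calc -∫ x, φ x * (c x * (φ x - g x) - δ x + τ x * w x) ∂ν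
      = ∫ x, -(φ x * (c x * (φ x - g x) - δ x + τ x * w x)) ∂ν := (integral_neg _).symm
    _ ≤ ∫ x, (-(1 / 2) * (c x * φ x ^ 2) + (3 / 2) * (c x * g x ^ 2)
        + (3 / (2 * κlo)) * (l x * δ x ^ 2) + (1 / 2) * (τ x * w x ^ 2)) ∂ν := by
      refine integral_mono_ae hint.neg (((hφ'.add hg').add hδ').add hw') ?_
      filter_upwards [hcl, hτ] with x hclx hτx
      exact neg_mul_boundary_flux_le hκlo hclx hτx.1 hτx.2
    _ = _ := by
      rw [integral_add (by exact (hφ'.add hg').add hδ') hw',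
        integral_add (by exact hφ'.add hg') hδ', integral_add hφ' hg', integral_const_mul,
        integral_const_mul, integral_const_mul, integral_const_mul]

lemma three_mul_le_div_of_le_div {κ l τ τbar κlo : ℝ} (hκ : κlo ≤ κ) (hl : 0 < l)
    (hlτ : l ≤ κlo / (3 * τbar)) (hτ : 0 < τ) (hττ : τ ≤ τbar) : 3 * τ ≤ κ / l := by
  have hlτ' : l * (3 * τbar) ≤ κlo := (le_div_iff₀ (by linarith)).1 hlτ
  rw [le_div_iff₀ hl]
  nlinarith

lemma MeasureTheory.L2.integral_mul_le_norm_mul_norm {α : Type*} [MeasurableSpace α]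
    {μ : Measure α} (f u : Lp ℝ 2 μ) : ∫ x, f x * u x ∂μ ≤ ‖f‖ * ‖u‖ := by
  have hinner : ∫ x, f x * u x ∂μ = inner ℝ f u := by
    rw [L2.inner_def]
    refine integral_congr_ae (Filter.Eventually.of_forall fun x => ?_)
    simp [mul_comm]
  exact hinner ▸ real_inner_le_norm f u

lemma add_le_max_one_mul_of_le {Q A B P F U G κhi : ℝ} (hQ : Q ≤ κhi * A) (hA : 0 ≤ A)
    (hB : 0 ≤ B) (hP : 0 ≤ P) (h : A + B + P ≤ 2 * (F * U) + 3 * G) :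
    Q + A + B + P ≤ max 1 κhi * (4 * F * U + 6 * G) := by
  have hM1 : 1 ≤ max 1 κhi := le_max_left _ _
  have hQA : Q ≤ max 1 κhi * A := hQ.trans (mul_le_mul_of_nonneg_right (le_max_right _ _) hA)
  nlinarith [mul_le_mul_of_nonneg_left h (zero_le_one.trans hM1)]

theorem estimate_norm_H2_general
    {Ω S : Type*} [MeasurableSpace Ω] [MeasurableSpace S]
    (μ : Measure Ω) (ν : Measure S) (Γ : Set S)
    (d : ℕ)
    (q σ : Lp (EuclideanSpace ℝ (Fin d)) 2 μ)
    (f u : Lp ℝ 2 μ)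
    (κΩ : Ω → ℝ)
    (κ : S → ℝ)
    (κlo κhi : ℝ) (hκlo : 0 < κlo)
    (hκΩae : ∀ᵐ x ∂μ, κlo ≤ κΩ x ∧ κΩ x ≤ κhi)
    (hκae : ∀ᵐ x ∂(ν.restrict Γ), κlo ≤ κ x ∧ κ x ≤ κhi)
    (τ : S → ℝ)
    (τbar : ℝ)
    (hτae : ∀ᵐ x ∂ν, 0 < τ x ∧ τ x ≤ τbar)
    (w : S → ℝ)
    (hτw : Integrable (fun x => τ x * w x ^ 2) ν)
    (φ g δ l : S → ℝ)
    (hlae : ∀ᵐ x ∂(ν.restrict Γ), 0 < l x ∧ l x ≤ κlo / (3 * τbar))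
    (intφ : Integrable
      (fun x => φ x * ((κ x / l x) * (φ x - g x) - δ x + τ x * w x))
      (ν.restrict Γ))
    (intφ2 : Integrable (fun x => (κ x / l x) * φ x ^ 2) (ν.restrict Γ))
    (intg2 : Integrable (fun x => (κ x / l x) * g x ^ 2) (ν.restrict Γ))
    (intlδ : Integrable (fun x => l x * δ x ^ 2) (ν.restrict Γ))
    (hflux : ∫ x, ‖q x‖ ^ 2 ∂μ ≤ κhi * ∫ x, κΩ x * ‖σ x‖ ^ 2 ∂μ)
    (hdev : ∫ x in Γ, l x * δ x ^ 2 ∂ν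
      ≤ (κlo / 3) * ∫ x, κΩ x * ‖σ x‖ ^ 2 ∂μ)
    (henergy : (∫ x, κΩ x * ‖σ x‖ ^ 2 ∂μ) + ∫ x, τ x * w x ^ 2 ∂ν
      = -(∫ x in Γ, φ x * ((κ x / l x) * (φ x - g x) - δ x + τ x * w x) ∂ν)
        + ∫ x, f x * u x ∂μ) :
    (∫ x, ‖q x‖ ^ 2 ∂μ) + (∫ x, κΩ x * ‖σ x‖ ^ 2 ∂μ)
        + (∫ x, τ x * w x ^ 2 ∂ν) + (∫ x in Γ, (κ x / l x) * φ x ^ 2 ∂ν)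
      ≤ max 1 κhi
          * (4 * ‖f‖ * ‖u‖ + 6 * ∫ x in Γ, (κ x / l x) * g x ^ 2 ∂ν) := by
  have hτw0 : 0 ≤ᵐ[ν] fun x => τ x * w x ^ 2 := by
    filter_upwards [hτae] with x hx
    exact mul_nonneg hx.1.le (sq_nonneg _)
  have hA : 0 ≤ ∫ x, κΩ x * ‖σ x‖ ^ 2 ∂μ := integral_nonneg_of_ae <| by
    filter_upwards [hκΩae] with x hx
    exact mul_nonneg (hκlo.le.trans hx.1) (sq_nonneg _)
  have hP : 0 ≤ ∫ x in Γ, (κ x / l x) * φ x ^ 2 ∂ν := integral_nonneg_of_ae <| by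
    filter_upwards [hκae, hlae] with x hκx hlx
    exact mul_nonneg (div_nonneg (hκlo.le.trans hκx.1) hlx.1.le) (sq_nonneg _)
  have hboundary := neg_integral_boundary_flux_le (ν := ν.restrict Γ) hκlo
    (by
      filter_upwards [hκae, hlae] with x hκx hlx
      rw [div_mul_cancel₀ _ hlx.1.ne']
      exact hκx.1)
    (by
      filter_upwards [hκae, hlae, ae_restrict_of_ae hτae] with x hκx hlx hτx
      exact ⟨hτx.1.le, three_mul_le_div_of_le_div hκx.1 hlx.1 hlx.2 hτx.1 hτx.2⟩)
    intφ intφ2 intg2 intlδ hτw.restrict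
  have hδσ : 3 / (2 * κlo) * ∫ x in Γ, l x * δ x ^ 2 ∂ν
      ≤ 1 / 2 * ∫ x, κΩ x * ‖σ x‖ ^ 2 ∂μ := by
    calc _ ≤ 3 / (2 * κlo) * ((κlo / 3) * ∫ x, κΩ x * ‖σ x‖ ^ 2 ∂μ) := by gcongr
      _ = _ := by field_simp
  refine add_le_max_one_mul_of_le hflux hA (integral_nonneg_of_ae hτw0) hP ?_
  linarith [henergy, hboundary, hδσ, setIntegral_le_integral (s := Γ) hτw hτw0,
    L2.integral_mul_le_norm_mul_norm f u]

/-- Lemma 4.1 (`EstimateNormH2`) of the paper, for the problem with diffusion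
coefficient `κ = κ(∇u)`: under the flux bound, the flux-deviation bound and
the energy identity, the squared triple norm is controlled by
`max{1, κ̄}(4‖f‖‖u‖ + 6 ∫_Γ (κ/l) ḡ²)`. -/
theorem estimate_norm_H2
    {Ω S : Type*} [MeasurableSpace Ω] [MeasurableSpace S]
    (μ : Measure Ω) (ν : Measure S) (Γ : Set S) (hΓ : MeasurableSet Γ)
    (d : ℕ) (hd : 1 ≤ d)
    (q σ : Lp (EuclideanSpace ℝ (Fin d)) 2 μ)
    (f u : Lp ℝ 2 μ)
    (κΩ : Ω → ℝ) (hκΩmeas : Measurable κΩ)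
    (κ : S → ℝ) (hκmeas : Measurable κ)
    (κlo κhi : ℝ) (hκlo : 0 < κlo) (hκord : κlo ≤ κhi)
    (hκΩae : ∀ᵐ x ∂μ, κlo ≤ κΩ x ∧ κΩ x ≤ κhi)
    (hκae : ∀ᵐ x ∂(ν.restrict Γ), κlo ≤ κ x ∧ κ x ≤ κhi)
    (τ : S → ℝ) (hτmeas : Measurable τ)
    (τbar : ℝ) (hτbar : 0 < τbar)
    (hτae : ∀ᵐ x ∂ν, 0 < τ x ∧ τ x ≤ τbar)
    (w : S → ℝ) (hwmeas : Measurable w)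
    (hτw : Integrable (fun x => τ x * w x ^ 2) ν)
    (φ g δ l : S → ℝ)
    (hφmeas : Measurable φ) (hgmeas : Measurable g)
    (hδmeas : Measurable δ) (hlmeas : Measurable l)
    (hlae : ∀ᵐ x ∂(ν.restrict Γ), 0 < l x ∧ l x ≤ κlo / (3 * τbar))
    (intq : Integrable (fun x => ‖q x‖ ^ 2) μ)
    (intσ : Integrable (fun x => κΩ x * ‖σ x‖ ^ 2) μ)
    (intφ : Integrable
      (fun x => φ x * ((κ x / l x) * (φ x - g x) - δ x + τ x * w x))
      (ν.restrict Γ))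
    (intφ2 : Integrable (fun x => (κ x / l x) * φ x ^ 2) (ν.restrict Γ))
    (intg2 : Integrable (fun x => (κ x / l x) * g x ^ 2) (ν.restrict Γ))
    (intlδ : Integrable (fun x => l x * δ x ^ 2) (ν.restrict Γ))
    (intfu : Integrable (fun x => f x * u x) μ)
    (hflux : ∫ x, ‖q x‖ ^ 2 ∂μ ≤ κhi * ∫ x, κΩ x * ‖σ x‖ ^ 2 ∂μ)
    (hdev : ∫ x in Γ, l x * δ x ^ 2 ∂ν
      ≤ (κlo / 3) * ∫ x, κΩ x * ‖σ x‖ ^ 2 ∂μ)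
    (henergy : (∫ x, κΩ x * ‖σ x‖ ^ 2 ∂μ) + ∫ x, τ x * w x ^ 2 ∂ν
      = -(∫ x in Γ, φ x * ((κ x / l x) * (φ x - g x) - δ x + τ x * w x) ∂ν)
        + ∫ x, f x * u x ∂μ) :
    (∫ x, ‖q x‖ ^ 2 ∂μ) + (∫ x, κΩ x * ‖σ x‖ ^ 2 ∂μ)
        + (∫ x, τ x * w x ^ 2 ∂ν) + (∫ x in Γ, (κ x / l x) * φ x ^ 2 ∂ν)
      ≤ max 1 κhi
          * (4 * ‖f‖ * ‖u‖ + 6 * ∫ x in Γ, (κ x / l x) * g x ^ 2 ∂ν) :=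
  estimate_norm_H2_general μ ν Γ d q σ f u κΩ κ κlo κhi hκlo hκΩae hκae τ τbar hτae w hτw φ g δ l
    hlae intφ intφ2 intg2 intlδ hflux hdev henergy
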